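/- arXiv:2102.10300 — 2 statements merged into one kernel-verified Lean document; each statement's English description precedes it below -/
import Mathlib

section
/- Let M₁, M₂, ..., M_k be R-modules, M = M₁ × M₂ × ⋯ × M_k, and let N = N₁ × N₂ × ⋯ × N_k be a quasi J-submodule of M, where each Nᵢ is a submodule of Mᵢ. Then for every index i with Nᵢ ≠ Mᵢ, the submodule Nᵢ is a quasi J-submodule of Mᵢ. -/
open Submodule Pointwise

/-- The ideal `(J(R)M : M)` where `J(R)` is the Jacobson radical of `R`. -/
def jacobsonColon (R M : Type*) [CommRing R] [AddCommGroup M] [Module R M] : Ideal R :=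
  ((⊥ : Ideal R).jacobson • (⊤ : Submodule R M)).colon ⊤

/-- A prime submodule: a proper submodule `N` such that whenever `r • m ∈ N`,
either `m ∈ N` or `r • M ⊆ N`. -/
def IsPrimeSubmodule {R M : Type*} [CommRing R] [AddCommGroup M] [Module R M]
    (N : Submodule R M) : Prop :=
  N ≠ ⊤ ∧ ∀ (r : R) (m : M), r • m ∈ N → m ∈ N ∨ r ∈ N.colon ⊤

/-- `M`-rad(N): the intersection of all prime submodules of `M` containing `N`
(equal to `⊤` if there are none). -/
def Mrad {R M : Type*} [CommRing R] [AddCommGroup M] [Module R M]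
    (N : Submodule R M) : Submodule R M :=
  sInf {P : Submodule R M | IsPrimeSubmodule P ∧ N ≤ P}

/-- A quasi `J`-submodule. -/
def IsQuasiJSubmodule {R M : Type*} [CommRing R] [AddCommGroup M] [Module R M]
    (N : Submodule R M) : Prop :=
  N ≠ ⊤ ∧ ∀ (r : R) (m : M), r • m ∈ N → r ∉ jacobsonColon R M → m ∈ Mrad N


/-! A factor `Mᵢ` of the product is a retract of it, via the projection and the inclusion
`Pi.single i`. The quasi `J`-property passes along such a retraction because a surjection
`f : M → M'` carries `J(R)M` onto `J(R)M'`, so `(J(R)M : M) ⊆ (J(R)M' : M')`, and pulls prime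
submodules back to prime submodules, so it maps `M-rad(N)` into `M'-rad(N')` whenever `f(N) ⊆ N'`. -/

section Surjective

variable {R M M' : Type*} [CommRing R] [AddCommGroup M] [Module R M] [AddCommGroup M']
  [Module R M'] {f : M →ₗ[R] M'}

theorem jacobsonColon_le_of_surjective (hf : Function.Surjective f) :
    jacobsonColon R M ≤ jacobsonColon R M' := by
  intro r hr
  rw [jacobsonColon, mem_colon] at hr ⊢
  rintro y -
  obtain ⟨x, rfl⟩ := hf y
  have hx := mem_map_of_mem (f := f) (hr x trivial)
  rwa [map_smul'', Submodule.map_top, LinearMap.range_eq_top.mpr hf, map_smul] at hx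

theorem IsPrimeSubmodule.comap_of_surjective {P : Submodule R M'} (hP : IsPrimeSubmodule P)
    (hf : Function.Surjective f) : IsPrimeSubmodule (P.comap f) := by
  refine ⟨fun htop => hP.1 ?_, fun r m hrm => ?_⟩
  · rw [← map_comap_eq_of_surjective hf P, htop, Submodule.map_top, LinearMap.range_eq_top.mpr hf]
  · refine (hP.2 r (f m) (by simpa using hrm)).imp id fun hr => mem_colon.mpr fun x _ => ?_
    simpa using mem_colon.mp hr (f x) trivial

theorem Mrad_le_comap_Mrad_of_surjective {N : Submodule R M} {N' : Submodule R M'}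
    (hf : Function.Surjective f) (hN : N ≤ N'.comap f) : Mrad N ≤ (Mrad N').comap f :=
  fun _ hx => mem_sInf.mpr fun P ⟨hP, hNP⟩ =>
    mem_sInf.mp hx (P.comap f) ⟨hP.comap_of_surjective hf, hN.trans (comap_mono hNP)⟩

theorem IsQuasiJSubmodule.of_leftInverse {s : M' →ₗ[R] M} (hfs : Function.LeftInverse f s)
    {N : Submodule R M} {N' : Submodule R M'} (hN : IsQuasiJSubmodule N) (hN' : N' ≠ ⊤)
    (hNf : N ≤ N'.comap f) (hN's : N' ≤ N.comap s) : IsQuasiJSubmodule N' := by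
  refine ⟨hN', fun r m hrm hr => ?_⟩
  have hsm : s m ∈ Mrad N := hN.2 r (s m) (by simpa using hN's hrm)
    fun hrM => hr (jacobsonColon_le_of_surjective hfs.surjective hrM)
  simpa [hfs m] using Mrad_le_comap_Mrad_of_surjective hfs.surjective hNf hsm

end Surjective

theorem stmt4 {R : Type*} [CommRing R] {k : ℕ} {M : Fin k → Type*}
    [∀ i, AddCommGroup (M i)] [∀ i, Module R (M i)]
    (N : ∀ i, Submodule R (M i))
    (hN : IsQuasiJSubmodule (Submodule.pi Set.univ N)) :
    ∀ i, N i ≠ ⊤ → IsQuasiJSubmodule (N i) := fun i hNi =>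
  hN.of_leftInverse (f := LinearMap.proj i) (s := LinearMap.single R M i)
    (fun _ => Pi.single_eq_same _ _) hNi (fun _ hx => mem_comap.mpr (hx i trivial))
    (le_comap_single_pi N)
end

section
/- Let M be a finitely generated faithful multiplication R-module and N a submodule of M. Then N is a quasi J-submodule of M if and only if (N : M) is a quasi J-ideal of R. -/
/-!
For a finitely generated faithful module, Cayley–Hamilton gives `(IM : M) ⊆ √I`, hence
`(IM : M) = I` for every radical ideal `I`: in particular `(J(R)M : M) = J(R)` and `(pM : M) = p`
for primes `p`. In a multiplication module, where `m ∈ (Rm : M) M` and `rm ∈ N` forces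
`r (Rm : M) ⊆ (N : M)`, the prime submodules are then exactly the `pM`, so
`M-rad(N) = √(N : M) M`. With these two identities both implications reduce to the defining
property of a `J`-ideal.
-/

open Submodule Pointwise

/-- A `J`-ideal of a commutative ring. -/
def IsJIdeal {R : Type*} [CommRing R] (I : Ideal R) : Prop :=
  I ≠ ⊤ ∧ ∀ a b : R, a * b ∈ I → a ∉ (⊥ : Ideal R).jacobson → b ∈ I

/-- A quasi `J`-ideal: a proper ideal whose radical is a `J`-ideal. -/
def IsQuasiJIdeal {R : Type*} [CommRing R] (I : Ideal R) : Prop :=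
  I ≠ ⊤ ∧ IsJIdeal I.radical

def IsMultiplicationModule (R M : Type*) [CommRing R] [AddCommGroup M] [Module R M] : Prop :=
  ∀ N : Submodule R M, N = N.colon ⊤ • (⊤ : Submodule R M)

lemma Polynomial.Monic.mem_radical_of_eval_eq_zero {R : Type*} [CommRing R] {I : Ideal R}
    {p : Polynomial R} (hp : p.Monic) {r : R} (hr : p.eval r = 0)
    (hcoeff : ∀ i < p.natDegree, p.coeff i ∈ I) : r ∈ I.radical := by
  have hsum := p.eval_eq_sum_range r
  rw [Finset.sum_range_succ, hp.coeff_natDegree, one_mul, hr] at hsum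
  have hpow : r ^ p.natDegree = -∑ i ∈ Finset.range p.natDegree, p.coeff i * r ^ i := by
    linear_combination -hsum
  refine ⟨p.natDegree, hpow ▸ neg_mem (Ideal.sum_mem _ fun i hi => ?_)⟩
  exact Ideal.mul_mem_right _ _ (hcoeff i (Finset.mem_range.mp hi))

namespace Submodule

variable {R M : Type*} [CommRing R] [AddCommGroup M] [Module R M]

lemma colon_top_eq_top_iff {N : Submodule R M} : N.colon ⊤ = ⊤ ↔ N = ⊤ := by
  rw [colon_eq_top_iff_subset, Set.top_eq_univ, Set.univ_subset_iff, coe_eq_univ]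

lemma le_colon_smul_top (I : Ideal R) : I ≤ (I • (⊤ : Submodule R M)).colon ⊤ :=
  fun _ hr => mem_colon.mpr fun _ _ => smul_mem_smul hr trivial

lemma mul_mem_colon_of_smul_mem {N : Submodule R M} {r k : R} {m : M} (hrm : r • m ∈ N)
    (hk : k ∈ (span R {m}).colon ⊤) : r * k ∈ N.colon ⊤ := by
  refine mem_colon.mpr fun m' _ => ?_
  obtain ⟨c, hc⟩ := mem_span_singleton.mp (mem_colon.mp hk m' trivial)
  rw [mul_smul, ← hc, smul_comm]
  exact N.smul_mem c hrm

lemma colon_smul_top_le_radical [Module.Finite R M] [FaithfulSMul R M] (I : Ideal R) :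
    (I • (⊤ : Submodule R M)).colon ⊤ ≤ I.radical := by
  intro r hr
  have hrange : LinearMap.range (algebraMap R (Module.End R M) r) ≤ I • ⊤ := by
    rintro _ ⟨m, rfl⟩
    exact mem_colon.mp hr m trivial
  obtain ⟨p, hmonic, -, hcoeff, haeval⟩ :=
    LinearMap.exists_monic_and_natDegree_eq_and_coeff_mem_pow_and_aeval_eq_zero R _ I hrange
  have heval : p.eval r = 0 := by
    refine FaithfulSMul.eq_of_smul_eq_smul (α := M) fun m => ?_
    have := LinearMap.congr_fun
      ((Polynomial.aeval_algebraMap_apply_eq_algebraMap_eval r p).symm.trans haeval) m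
    simpa [Module.algebraMap_end_apply] using this
  exact hmonic.mem_radical_of_eval_eq_zero heval fun i hi =>
    Ideal.pow_le_self (Nat.sub_ne_zero_of_lt hi) (hcoeff i)

lemma colon_smul_top_eq_of_isRadical [Module.Finite R M] [FaithfulSMul R M] {I : Ideal R}
    (hI : I.IsRadical) : (I • (⊤ : Submodule R M)).colon ⊤ = I :=
  le_antisymm ((colon_smul_top_le_radical I).trans hI.radical.le) (le_colon_smul_top I)

lemma mem_colon_span_singleton_smul_top (hmult : IsMultiplicationModule R M) (m : M) :
    m ∈ (span R {m}).colon ⊤ • (⊤ : Submodule R M) :=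
  hmult (span R {m}) ▸ mem_span_singleton_self m

end Submodule

section PrimeSubmodule

variable {R M : Type*} [CommRing R] [AddCommGroup M] [Module R M]

lemma IsPrimeSubmodule.colon_isPrime {P : Submodule R M} (hP : IsPrimeSubmodule P) :
    (P.colon ⊤).IsPrime := by
  refine Ideal.isPrime_iff.mpr ⟨colon_top_eq_top_iff.not.mpr hP.1, fun {a b} hab => ?_⟩
  refine or_iff_not_imp_left.mpr fun ha => mem_colon.mpr fun m _ => ?_
  have habm : a • b • m ∈ P := by
    rw [← mul_smul]
    exact mem_colon.mp hab m trivial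
  exact (hP.2 a (b • m) habm).resolve_right ha

lemma isPrimeSubmodule_smul_top [Module.Finite R M] [FaithfulSMul R M]
    (hmult : IsMultiplicationModule R M) {p : Ideal R} (hp : p.IsPrime) :
    IsPrimeSubmodule (p • (⊤ : Submodule R M)) := by
  have hcolon := colon_smul_top_eq_of_isRadical (M := M) hp.isRadical
  refine ⟨fun h => hp.ne_top (hcolon ▸ colon_top_eq_top_iff.mpr h), fun r m hrm => ?_⟩
  by_cases hr : r ∈ p
  · exact Or.inr (le_colon_smul_top p hr)
  · have hK : (span R {m}).colon ⊤ ≤ p := fun k hk =>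
      (hp.mem_or_mem (hcolon ▸ mul_mem_colon_of_smul_mem hrm hk)).resolve_left hr
    exact Or.inl (smul_mono_left hK (mem_colon_span_singleton_smul_top hmult m))

lemma radical_colon_smul_top_le_Mrad (hmult : IsMultiplicationModule R M) (N : Submodule R M) :
    (N.colon ⊤).radical • (⊤ : Submodule R M) ≤ Mrad N := by
  refine le_sInf fun P ⟨hP, hNP⟩ => ?_
  rw [hmult P]
  exact smul_mono_left (hP.colon_isPrime.radical_le_iff.mpr (colon_mono hNP le_rfl))

lemma colon_Mrad_le_radical [Module.Finite R M] [FaithfulSMul R M]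
    (hmult : IsMultiplicationModule R M) (N : Submodule R M) :
    (Mrad N).colon ⊤ ≤ (N.colon ⊤).radical := by
  rw [Ideal.radical_eq_sInf]
  refine le_sInf fun p ⟨hNp, hp⟩ => ?_
  have hN : N ≤ p • ⊤ := hmult N ▸ smul_mono_left hNp
  have hMrad : Mrad N ≤ p • ⊤ := sInf_le ⟨isPrimeSubmodule_smul_top hmult hp, hN⟩
  exact (colon_mono hMrad le_rfl).trans (colon_smul_top_eq_of_isRadical hp.isRadical).le

lemma Mrad_eq_radical_colon_smul_top [Module.Finite R M] [FaithfulSMul R M]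
    (hmult : IsMultiplicationModule R M) (N : Submodule R M) :
    Mrad N = (N.colon ⊤).radical • (⊤ : Submodule R M) :=
  le_antisymm (hmult (Mrad N) ▸ smul_mono_left (colon_Mrad_le_radical hmult N))
    (radical_colon_smul_top_le_Mrad hmult N)

lemma jacobsonColon_eq_jacobson [Module.Finite R M] [FaithfulSMul R M] :
    jacobsonColon R M = (⊥ : Ideal R).jacobson :=
  colon_smul_top_eq_of_isRadical (Ideal.isRadical_jacobson ⊥)

end PrimeSubmodule

theorem stmt14 {R M : Type*} [CommRing R] [AddCommGroup M] [Module R M]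
    [Module.Finite R M]
    (hfaithful : ∀ r : R, (∀ m : M, r • m = 0) → r = 0)
    (hmult : ∀ N : Submodule R M, N = N.colon ⊤ • (⊤ : Submodule R M))
    (N : Submodule R M) :
    IsQuasiJSubmodule N ↔ IsQuasiJIdeal (N.colon ⊤) := by
  have : FaithfulSMul R M :=
    ⟨fun h => sub_eq_zero.mp (hfaithful _ fun m => by rw [sub_smul, h, sub_self])⟩
  have hradical := colon_smul_top_eq_of_isRadical (M := M) (N.colon ⊤).radical_isRadical
  simp only [IsQuasiJSubmodule, IsQuasiJIdeal, IsJIdeal, jacobsonColon_eq_jacobson,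
    Mrad_eq_radical_colon_smul_top hmult, ne_eq, Ideal.radical_eq_top, colon_top_eq_top_iff]
  constructor
  · rintro ⟨hN, hq⟩
    refine ⟨hN, hN, fun a b ⟨n, hab⟩ ha =>
      Ideal.mem_radical_of_pow_mem (m := n) (hradical ▸ mem_colon.mpr fun m _ => ?_)⟩
    refine hq (a ^ n) (b ^ n • m) ?_ fun han => ha ((Ideal.isRadical_jacobson ⊥) ⟨n, han⟩)
    rw [smul_smul, ← mul_pow]
    exact mem_colon.mp hab m trivial
  · rintro ⟨hN, -, hJ⟩
    refine ⟨hN, fun r m hrm hr => smul_mono_left (fun k hk => ?_)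
      (mem_colon_span_singleton_smul_top hmult m)⟩
    exact hJ r k (Ideal.le_radical (mul_mem_colon_of_smul_mem hrm hk)) hr
end
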